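/- arXiv:2507.17036 — 3 statements merged into one kernel-verified Lean document; each statement's English description precedes it below -/
import Mathlib

section
/- Let N, m be positive integers, let A ∈ ℂ^{N×N} be a matrix of rank r, and let ε ∈ (0,1). Suppose M₁ ∈ ℂ^{m×N} is an ε-JL map of the column space of A and M₂ ∈ ℂ^{m×N} is an ε-JL map of the column space of A*. Then for every j ∈ {1,…,N}, |σ_j(M₁ A M₂*) − σ_j(A)| ≤ ε(2+ε)·σ_j(A). -/
open scoped Matrix

/-- The squared Euclidean (ℓ²) norm of a vector in `ℂ^n`. -/
noncomputable def nsq {n : ℕ} (x : Fin n → ℂ) : ℝ := ∑ i, ‖x i‖ ^ 2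

/-- `M` is an `ε`-JL map of the set `S ⊆ ℂ^N`:
`(1-ε)‖x‖₂² ≤ ‖Mx‖₂² ≤ (1+ε)‖x‖₂²` for all `x ∈ S`. -/
def IsJLMap {m N : ℕ} (M : Matrix (Fin m) (Fin N) ℂ) (ε : ℝ) (S : Set (Fin N → ℂ)) : Prop :=
  ∀ x ∈ S, (1 - ε) * nsq x ≤ nsq (M.mulVec x) ∧ nsq (M.mulVec x) ≤ (1 + ε) * nsq x

/-- The `j`-th largest singular value of a square matrix (`j` is 0-indexed, so `sval B 0`
is the largest singular value); it is `0` if `j ≥ d`.  It is defined as the square root of the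
`j`-th largest eigenvalue of `Bᴴ * B`. -/
noncomputable def sval {d : ℕ} (B : Matrix (Fin d) (Fin d) ℂ) (j : ℕ) : ℝ :=
  if h : j < d then
    Real.sqrt (((Matrix.isHermitian_conjTranspose_mul_self B)).eigenvalues
      (Tuple.sort ((Matrix.isHermitian_conjTranspose_mul_self B)).eigenvalues (Fin.rev ⟨j, h⟩)))
  else 0

/-! Write `σ_j(B)² = λ_j(BᴴB)`. By Courant–Fischer, `‖Bx‖² ≤ c ‖Cx‖²` for all `x` gives
`λ_j(BᴴB) ≤ c λ_j(CᴴC)`, and similarly from below. Moreover `λ_j(DᴴD) = λ_j(DDᴴ)` for `j` below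
both dimensions: `D` maps the top `j + 1` eigenvectors of `DᴴD` injectively onto a subspace on
which the form of `DDᴴ` is at least `λ_j(DᴴD)`.

With `E = A M₂ᴴ`, the JL property of `M₁` on `range A ⊇ range E` puts `σ_j(M₁E)²` within a factor
`1 ± ε` of `σ_j(E)² = σ_j(M₂Aᴴ)²`, and the JL property of `M₂` on `range Aᴴ` puts that within a
factor `1 ± ε` of `σ_j(Aᴴ)² = σ_j(A)²`. Taking square roots,
`(1 - ε) σ_j(A) ≤ σ_j(M₁AM₂ᴴ) ≤ (1 + ε) σ_j(A)`. For `j ≥ m` both singular values vanish, since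
`M₁` is injective on `range A`, so `rank A ≤ m ≤ j`. -/

open Matrix Module

section NormSq

variable {n : ℕ}

lemma nsq_eq_re_star_dotProduct (x : Fin n → ℂ) : nsq x = (star x ⬝ᵥ x).re := by
  simp [nsq, dotProduct, Complex.re_sum, Complex.sq_norm, Complex.normSq_apply]

lemma nsq_nonneg (x : Fin n → ℂ) : 0 ≤ nsq x :=
  Finset.sum_nonneg fun _ _ => sq_nonneg _

lemma nsq_eq_zero_iff {x : Fin n → ℂ} : nsq x = 0 ↔ x = 0 := by
  simp [nsq, Finset.sum_eq_zero_iff_of_nonneg, funext_iff]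

lemma nsq_pos {x : Fin n → ℂ} (hx : x ≠ 0) : 0 < nsq x :=
  (nsq_nonneg x).lt_of_ne (Ne.symm (mt nsq_eq_zero_iff.1 hx))

lemma star_mulVec_dotProduct_mulVec_of_mem_unitaryGroup {U : Matrix (Fin n) (Fin n) ℂ}
    (hU : U ∈ unitaryGroup (Fin n) ℂ) (x y : Fin n → ℂ) :
    star (U *ᵥ x) ⬝ᵥ (U *ᵥ y) = star x ⬝ᵥ y := by
  rw [star_mulVec, dotProduct_mulVec, vecMul_vecMul, ← star_eq_conjTranspose,
    (mem_unitaryGroup_iff').1 hU, vecMul_one]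

lemma nsq_mulVec_of_mem_unitaryGroup {U : Matrix (Fin n) (Fin n) ℂ}
    (hU : U ∈ unitaryGroup (Fin n) ℂ) (x : Fin n → ℂ) : nsq (U *ᵥ x) = nsq x := by
  rw [nsq_eq_re_star_dotProduct, star_mulVec_dotProduct_mulVec_of_mem_unitaryGroup hU,
    nsq_eq_re_star_dotProduct]

end NormSq

lemma Submodule.exists_mem_mem_ne_zero_of_finrank_lt {K V : Type*} [DivisionRing K]
    [AddCommGroup V] [Module K V] [FiniteDimensional K V] {s t : Submodule K V}
    (h : finrank K V < finrank K s + finrank K t) : ∃ x ∈ s, x ∈ t ∧ x ≠ 0 := by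
  have hst : ¬ Disjoint s t := fun hd => (finrank_add_finrank_le_of_disjoint hd).not_gt h
  simpa [Submodule.disjoint_def] using hst

noncomputable def quadForm {n : ℕ} (H : Matrix (Fin n) (Fin n) ℂ) (x : Fin n → ℂ) : ℝ :=
  (star x ⬝ᵥ H *ᵥ x).re

lemma quadForm_conjTranspose_mul_self {m n : ℕ} (B : Matrix (Fin m) (Fin n) ℂ)
    (x : Fin n → ℂ) : quadForm (Bᴴ * B) x = nsq (B *ᵥ x) := by
  rw [quadForm, ← mulVec_mulVec, dotProduct_mulVec, ← star_mulVec, nsq_eq_re_star_dotProduct]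

namespace Matrix.IsHermitian

variable {n : ℕ} {H : Matrix (Fin n) (Fin n) ℂ} (hH : H.IsHermitian)

noncomputable def eigenCoords : (Fin n → ℂ) ≃ₗ[ℂ] (Fin n → ℂ) :=
  UnitaryGroup.toLinearEquiv (star hH.eigenvectorUnitary)

lemma eigenCoords_apply (x : Fin n → ℂ) :
    hH.eigenCoords x =
      ((star hH.eigenvectorUnitary : unitaryGroup (Fin n) ℂ) : Matrix _ _ ℂ) *ᵥ x :=
  rfl

lemma nsq_eigenCoords (x : Fin n → ℂ) : nsq (hH.eigenCoords x) = nsq x :=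
  nsq_mulVec_of_mem_unitaryGroup (star hH.eigenvectorUnitary).2 x

lemma eigenCoords_mulVec (x : Fin n → ℂ) :
    hH.eigenCoords (H *ᵥ x) = fun i => (hH.eigenvalues i : ℂ) * hH.eigenCoords x i := by
  have hdiag := hH.conjStarAlgAut_star_eigenvectorUnitary
  rw [Unitary.conjStarAlgAut_apply] at hdiag
  have hcomm : ((star hH.eigenvectorUnitary : unitaryGroup (Fin n) ℂ) : Matrix _ _ ℂ) * H =
      diagonal (RCLike.ofReal ∘ hH.eigenvalues) *
        ((star hH.eigenvectorUnitary : unitaryGroup (Fin n) ℂ) : Matrix _ _ ℂ) := by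
    rw [← hdiag, Matrix.mul_assoc, Unitary.coe_star_mul_self, Matrix.mul_one]
  ext i
  rw [eigenCoords_apply, eigenCoords_apply, mulVec_mulVec, hcomm, ← mulVec_mulVec,
    mulVec_diagonal]
  rfl

lemma nsq_eq_sum (x : Fin n → ℂ) : nsq x = ∑ i, ‖hH.eigenCoords x i‖ ^ 2 := by
  rw [← hH.nsq_eigenCoords, nsq]

lemma quadForm_eq_sum (x : Fin n → ℂ) :
    quadForm H x = ∑ i, hH.eigenvalues i * ‖hH.eigenCoords x i‖ ^ 2 := by
  rw [quadForm, ← star_mulVec_dotProduct_mulVec_of_mem_unitaryGroup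
    (star hH.eigenvectorUnitary).2, ← eigenCoords_apply, ← eigenCoords_apply,
    eigenCoords_mulVec]
  simp only [dotProduct, Pi.star_apply, Complex.re_sum]
  refine Finset.sum_congr rfl fun i _ => ?_
  rw [mul_left_comm, RCLike.star_def, Complex.conj_mul', ← Complex.ofReal_pow,
    ← Complex.ofReal_mul, Complex.ofReal_re]

lemma nsq_mulVec_eq_sum (x : Fin n → ℂ) :
    nsq (H *ᵥ x) = ∑ i, hH.eigenvalues i ^ 2 * ‖hH.eigenCoords x i‖ ^ 2 := by
  rw [← hH.nsq_eigenCoords, eigenCoords_mulVec, nsq]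
  simp [mul_pow]

/-- The span of the eigenvectors of `H` indexed by `S`. -/
noncomputable def eigenSpan (S : Finset (Fin n)) : Submodule ℂ (Fin n → ℂ) :=
  (⨅ i ∈ (↑S : Set (Fin n))ᶜ,
      LinearMap.ker (LinearMap.proj i : (Fin n → ℂ) →ₗ[ℂ] ℂ)).comap
    (hH.eigenCoords : (Fin n → ℂ) →ₗ[ℂ] (Fin n → ℂ))

lemma mem_eigenSpan {S : Finset (Fin n)} {x : Fin n → ℂ} :
    x ∈ hH.eigenSpan S ↔ ∀ i ∉ S, hH.eigenCoords x i = 0 := by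
  simp [eigenSpan, Submodule.mem_iInf]

lemma finrank_eigenSpan (S : Finset (Fin n)) : finrank ℂ (hH.eigenSpan S) = S.card := by
  rw [eigenSpan, Submodule.comap_equiv_eq_map_symm, LinearEquiv.finrank_map_eq,
    (LinearMap.iInfKerProjEquiv ℂ (fun _ => ℂ) disjoint_compl_right (by simp)).finrank_eq]
  simp

lemma sum_mul_sq_norm_eigenCoords_le {S : Finset (Fin n)} {x : Fin n → ℂ}
    (hx : x ∈ hH.eigenSpan S) {f g : Fin n → ℝ} (hfg : ∀ i ∈ S, f i ≤ g i) :
    ∑ i, f i * ‖hH.eigenCoords x i‖ ^ 2 ≤ ∑ i, g i * ‖hH.eigenCoords x i‖ ^ 2 :=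
  Finset.sum_le_sum fun i _ => by
    by_cases hi : i ∈ S
    · exact mul_le_mul_of_nonneg_right (hfg i hi) (sq_nonneg _)
    · simp [hH.mem_eigenSpan.1 hx i hi]

/-- The eigenvalues in decreasing order: `sortedEig hH 0` is the largest. -/
noncomputable def sortedEig (j : Fin n) : ℝ :=
  hH.eigenvalues (Tuple.sort hH.eigenvalues j.rev)

/-- The span of eigenvectors for the `j + 1` largest eigenvalues. -/
noncomputable def topEigenspan (j : Fin n) : Submodule ℂ (Fin n → ℂ) :=
  hH.eigenSpan ((Finset.Ici j.rev).map (Tuple.sort hH.eigenvalues).toEmbedding)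

/-- The span of eigenvectors for the `n - j` smallest eigenvalues. -/
noncomputable def bottomEigenspan (j : Fin n) : Submodule ℂ (Fin n → ℂ) :=
  hH.eigenSpan ((Finset.Iic j.rev).map (Tuple.sort hH.eigenvalues).toEmbedding)

lemma finrank_topEigenspan (j : Fin n) : finrank ℂ (hH.topEigenspan j) = j + 1 := by
  rw [topEigenspan, finrank_eigenSpan, Finset.card_map, Fin.card_Ici, Fin.val_rev]
  omega

lemma finrank_bottomEigenspan (j : Fin n) : finrank ℂ (hH.bottomEigenspan j) = n - j := by
  rw [bottomEigenspan, finrank_eigenSpan, Finset.card_map, Fin.card_Iic, Fin.val_rev]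
  omega

lemma sortedEig_le_eigenvalues {j i : Fin n}
    (hi : i ∈ (Finset.Ici j.rev).map (Tuple.sort hH.eigenvalues).toEmbedding) :
    hH.sortedEig j ≤ hH.eigenvalues i := by
  obtain ⟨k, hk, rfl⟩ := Finset.mem_map.1 hi
  exact Tuple.monotone_sort hH.eigenvalues (Finset.mem_Ici.1 hk)

lemma eigenvalues_le_sortedEig {j i : Fin n}
    (hi : i ∈ (Finset.Iic j.rev).map (Tuple.sort hH.eigenvalues).toEmbedding) :
    hH.eigenvalues i ≤ hH.sortedEig j := by
  obtain ⟨k, hk, rfl⟩ := Finset.mem_map.1 hi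
  exact Tuple.monotone_sort hH.eigenvalues (Finset.mem_Iic.1 hk)

lemma sortedEig_mul_nsq_le_quadForm {j : Fin n} {x : Fin n → ℂ} (hx : x ∈ hH.topEigenspan j) :
    hH.sortedEig j * nsq x ≤ quadForm H x := by
  rw [hH.nsq_eq_sum, hH.quadForm_eq_sum, Finset.mul_sum]
  exact hH.sum_mul_sq_norm_eigenCoords_le hx fun i hi => hH.sortedEig_le_eigenvalues hi

lemma sortedEig_mul_quadForm_le_nsq_mulVec {j : Fin n} (hj : 0 ≤ hH.sortedEig j)
    {x : Fin n → ℂ} (hx : x ∈ hH.topEigenspan j) :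
    hH.sortedEig j * quadForm H x ≤ nsq (H *ᵥ x) := by
  rw [hH.quadForm_eq_sum, hH.nsq_mulVec_eq_sum, Finset.mul_sum]
  simp_rw [← mul_assoc]
  refine hH.sum_mul_sq_norm_eigenCoords_le hx fun i hi => ?_
  have hle := hH.sortedEig_le_eigenvalues hi
  rw [sq]
  exact mul_le_mul_of_nonneg_right hle (hj.trans hle)

lemma quadForm_le_sortedEig_mul_nsq {j : Fin n} {x : Fin n → ℂ}
    (hx : x ∈ hH.bottomEigenspan j) : quadForm H x ≤ hH.sortedEig j * nsq x := by
  rw [hH.nsq_eq_sum, hH.quadForm_eq_sum, Finset.mul_sum]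
  exact hH.sum_mul_sq_norm_eigenCoords_le hx fun i hi => hH.eigenvalues_le_sortedEig hi

/-- Courant–Fischer, lower bound. -/
lemma le_sortedEig_of_forall_mem (j : Fin n) {a : ℝ} (V : Submodule ℂ (Fin n → ℂ))
    (hV : (j : ℕ) + 1 ≤ finrank ℂ V) (h : ∀ x ∈ V, a * nsq x ≤ quadForm H x) :
    a ≤ hH.sortedEig j := by
  obtain ⟨x, hxV, hxW, hx⟩ := Submodule.exists_mem_mem_ne_zero_of_finrank_lt
    (s := V) (t := hH.bottomEigenspan j)
    (by rw [finrank_fin_fun, hH.finrank_bottomEigenspan]; omega)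
  exact le_of_mul_le_mul_right ((h x hxV).trans (hH.quadForm_le_sortedEig_mul_nsq hxW))
    (nsq_pos hx)

/-- Courant–Fischer, upper bound. -/
lemma sortedEig_le_of_forall_mem (j : Fin n) {b : ℝ} (W : Submodule ℂ (Fin n → ℂ))
    (hW : n - (j : ℕ) ≤ finrank ℂ W) (h : ∀ x ∈ W, quadForm H x ≤ b * nsq x) :
    hH.sortedEig j ≤ b := by
  obtain ⟨x, hxV, hxW, hx⟩ := Submodule.exists_mem_mem_ne_zero_of_finrank_lt
    (s := hH.topEigenspan j) (t := W) (by rw [finrank_fin_fun, hH.finrank_topEigenspan]; omega)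
  exact le_of_mul_le_mul_right ((hH.sortedEig_mul_nsq_le_quadForm hxV).trans (h x hxW))
    (nsq_pos hx)

lemma sortedEig_nonneg (h : ∀ x, 0 ≤ quadForm H x) (j : Fin n) : 0 ≤ hH.sortedEig j :=
  hH.le_sortedEig_of_forall_mem j ⊤ (by simp) fun x _ => by simpa using h x

variable {K : Matrix (Fin n) (Fin n) ℂ} (hK : K.IsHermitian) {c : ℝ}

lemma sortedEig_le_mul_of_quadForm_le (hc : 0 ≤ c) (h : ∀ x, quadForm H x ≤ c * quadForm K x)
    (j : Fin n) : hH.sortedEig j ≤ c * hK.sortedEig j :=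
  hH.sortedEig_le_of_forall_mem j _ (hK.finrank_bottomEigenspan j).ge fun x hx =>
    calc quadForm H x ≤ c * quadForm K x := h x
      _ ≤ c * (hK.sortedEig j * nsq x) :=
          mul_le_mul_of_nonneg_left (hK.quadForm_le_sortedEig_mul_nsq hx) hc
      _ = c * hK.sortedEig j * nsq x := (mul_assoc _ _ _).symm

lemma mul_sortedEig_le_of_mul_quadForm_le (hc : 0 ≤ c)
    (h : ∀ x, c * quadForm K x ≤ quadForm H x) (j : Fin n) :
    c * hK.sortedEig j ≤ hH.sortedEig j :=
  hH.le_sortedEig_of_forall_mem j _ (hK.finrank_topEigenspan j).ge fun x hx =>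
    calc c * hK.sortedEig j * nsq x = c * (hK.sortedEig j * nsq x) := mul_assoc _ _ _
      _ ≤ c * quadForm K x :=
          mul_le_mul_of_nonneg_left (hK.sortedEig_mul_nsq_le_quadForm hx) hc
      _ ≤ quadForm H x := h x

end Matrix.IsHermitian

/-- `gramEig B j = σ_j(B)²`, the `j`-th largest eigenvalue of `Bᴴ * B`. -/
noncomputable def gramEig {m n : ℕ} (B : Matrix (Fin m) (Fin n) ℂ) (j : Fin n) : ℝ :=
  (isHermitian_conjTranspose_mul_self B).sortedEig j

section gramEig

variable {m n p : ℕ}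

lemma gramEig_nonneg (B : Matrix (Fin m) (Fin n) ℂ) (j : Fin n) : 0 ≤ gramEig B j :=
  (isHermitian_conjTranspose_mul_self B).sortedEig_nonneg
    (fun x => (quadForm_conjTranspose_mul_self B x).symm ▸ nsq_nonneg _) j

lemma gramEig_le_mul_of_nsq_le {B : Matrix (Fin m) (Fin n) ℂ} {C : Matrix (Fin p) (Fin n) ℂ}
    {c : ℝ} (hc : 0 ≤ c) (h : ∀ x, nsq (B *ᵥ x) ≤ c * nsq (C *ᵥ x)) (j : Fin n) :
    gramEig B j ≤ c * gramEig C j :=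
  (isHermitian_conjTranspose_mul_self B).sortedEig_le_mul_of_quadForm_le
    (isHermitian_conjTranspose_mul_self C) hc
    (by simpa only [quadForm_conjTranspose_mul_self] using h) j

lemma mul_gramEig_le_of_mul_nsq_le {B : Matrix (Fin m) (Fin n) ℂ} {C : Matrix (Fin p) (Fin n) ℂ}
    {c : ℝ} (hc : 0 ≤ c) (h : ∀ x, c * nsq (C *ᵥ x) ≤ nsq (B *ᵥ x)) (j : Fin n) :
    c * gramEig C j ≤ gramEig B j :=
  (isHermitian_conjTranspose_mul_self B).mul_sortedEig_le_of_mul_quadForm_le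
    (isHermitian_conjTranspose_mul_self C) hc
    (by simpa only [quadForm_conjTranspose_mul_self] using h) j

lemma gramEig_eq_zero_of_rank_le (B : Matrix (Fin m) (Fin n) ℂ) (j : Fin n) (h : B.rank ≤ j) :
    gramEig B j = 0 := by
  refine le_antisymm ?_ (gramEig_nonneg B j)
  refine (isHermitian_conjTranspose_mul_self B).sortedEig_le_of_forall_mem j
    (LinearMap.ker (mulVecLin B)) ?_ fun x hx => ?_
  · have := LinearMap.finrank_range_add_finrank_ker (mulVecLin B)
    rw [finrank_fin_fun] at this
    change finrank ℂ (LinearMap.range (mulVecLin B)) ≤ j at h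
    omega
  · rw [quadForm_conjTranspose_mul_self, show B *ᵥ x = 0 from hx, zero_mul,
      nsq_eq_zero_iff.2 rfl]

lemma gramEig_le_gramEig_conjTranspose (D : Matrix (Fin n) (Fin m) ℂ) {j : ℕ} (hn : j < n)
    (hm : j < m) : gramEig D ⟨j, hm⟩ ≤ gramEig Dᴴ ⟨j, hn⟩ := by
  set hH := isHermitian_conjTranspose_mul_self D
  rcases (gramEig_nonneg D ⟨j, hm⟩).eq_or_lt with h0 | hpos
  · rw [← h0]; exact gramEig_nonneg _ _
  set μ := gramEig D ⟨j, hm⟩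
  set V := hH.topEigenspan ⟨j, hm⟩
  have hinj : Function.Injective ((mulVecLin D).comp V.subtype) := by
    rw [← LinearMap.ker_eq_bot, Submodule.eq_bot_iff]
    rintro ⟨x, hx⟩ hDx
    have hle := hH.sortedEig_mul_nsq_le_quadForm hx
    rw [quadForm_conjTranspose_mul_self, show D *ᵥ x = 0 from hDx, nsq_eq_zero_iff.2 rfl] at hle
    ext1
    exact nsq_eq_zero_iff.1 (le_antisymm (nonpos_of_mul_nonpos_right hle hpos) (nsq_nonneg x))
  refine (isHermitian_conjTranspose_mul_self Dᴴ).le_sortedEig_of_forall_mem _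
    (LinearMap.range ((mulVecLin D).comp V.subtype)) ?_ ?_
  · rw [LinearMap.finrank_range_of_inj hinj, hH.finrank_topEigenspan]
  · rintro _ ⟨⟨x, hx⟩, rfl⟩
    calc μ * nsq (D *ᵥ x) = μ * quadForm (Dᴴ * D) x := by rw [quadForm_conjTranspose_mul_self]
      _ ≤ nsq ((Dᴴ * D) *ᵥ x) := hH.sortedEig_mul_quadForm_le_nsq_mulVec hpos.le hx
      _ = quadForm (Dᴴᴴ * Dᴴ) (D *ᵥ x) := by
        rw [quadForm_conjTranspose_mul_self, mulVec_mulVec]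

lemma gramEig_conjTranspose (D : Matrix (Fin n) (Fin m) ℂ) {j : ℕ} (hn : j < n) (hm : j < m) :
    gramEig Dᴴ ⟨j, hn⟩ = gramEig D ⟨j, hm⟩ :=
  le_antisymm (by simpa using gramEig_le_gramEig_conjTranspose Dᴴ hm hn)
    (gramEig_le_gramEig_conjTranspose D hn hm)

end gramEig

section IsJLMap

variable {m N n : ℕ} {M : Matrix (Fin m) (Fin N) ℂ} {ε : ℝ}

lemma IsJLMap.of_range_mul {k : ℕ} {A : Matrix (Fin N) (Fin n) ℂ}
    (C : Matrix (Fin n) (Fin k) ℂ) (hM : IsJLMap M ε (Set.range A.mulVec)) :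
    IsJLMap M ε (Set.range (A * C).mulVec) := by
  rintro _ ⟨x, rfl⟩
  exact hM _ ⟨C *ᵥ x, mulVec_mulVec x A C⟩

lemma IsJLMap.rank_le {A : Matrix (Fin N) (Fin n) ℂ} (hM : IsJLMap M ε (Set.range A.mulVec))
    (hε : ε < 1) : A.rank ≤ m := by
  have hinj :
      Function.Injective ((mulVecLin M).comp (LinearMap.range (mulVecLin A)).subtype) := by
    rw [← LinearMap.ker_eq_bot, Submodule.eq_bot_iff]
    rintro ⟨_, x, rfl⟩ hMx
    have hlo := (hM _ ⟨x, rfl⟩).1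
    rw [show M *ᵥ (A *ᵥ x) = 0 from hMx, nsq_eq_zero_iff.2 rfl] at hlo
    exact Subtype.ext <| nsq_eq_zero_iff.1 <|
      (nonpos_of_mul_nonpos_right hlo (by linarith)).antisymm (nsq_nonneg _)
  have hle := LinearMap.finrank_le_finrank_of_injective hinj
  rwa [finrank_fin_fun] at hle

lemma IsJLMap.gramEig_mul_le {B : Matrix (Fin N) (Fin n) ℂ}
    (hM : IsJLMap M ε (Set.range B.mulVec)) (hε : -1 ≤ ε) (j : Fin n) :
    gramEig (M * B) j ≤ (1 + ε) * gramEig B j :=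
  gramEig_le_mul_of_nsq_le (by linarith)
    (fun x => by rw [← mulVec_mulVec]; exact (hM _ ⟨x, rfl⟩).2) j

lemma IsJLMap.mul_gramEig_le {B : Matrix (Fin N) (Fin n) ℂ}
    (hM : IsJLMap M ε (Set.range B.mulVec)) (hε : ε ≤ 1) (j : Fin n) :
    (1 - ε) * gramEig B j ≤ gramEig (M * B) j :=
  mul_gramEig_le_of_mul_nsq_le (by linarith)
    (fun x => by rw [← mulVec_mulVec]; exact (hM _ ⟨x, rfl⟩).1) j

end IsJLMap

section Sandwich

variable {p q m₁ m₂ : ℕ} {A : Matrix (Fin p) (Fin q) ℂ}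
  {M₁ : Matrix (Fin m₁) (Fin p) ℂ} {M₂ : Matrix (Fin m₂) (Fin q) ℂ} {ε : ℝ} {j : ℕ}

lemma gramEig_mul_mul_conjTranspose_le (hM₁ : IsJLMap M₁ ε (Set.range A.mulVec))
    (hM₂ : IsJLMap M₂ ε (Set.range Aᴴ.mulVec)) (hε : -1 ≤ ε) (hp : j < p) (hq : j < q)
    (hm : j < m₂) :
    gramEig (M₁ * A * M₂ᴴ) ⟨j, hm⟩ ≤ (1 + ε) ^ 2 * gramEig A ⟨j, hq⟩ :=
  calc gramEig (M₁ * A * M₂ᴴ) ⟨j, hm⟩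
        ≤ (1 + ε) * gramEig (A * M₂ᴴ) ⟨j, hm⟩ := by
        rw [Matrix.mul_assoc]; exact (hM₁.of_range_mul M₂ᴴ).gramEig_mul_le hε _
    _ = (1 + ε) * gramEig (M₂ * Aᴴ) ⟨j, hp⟩ := by
        rw [← gramEig_conjTranspose _ hp hm, conjTranspose_mul, conjTranspose_conjTranspose]
    _ ≤ (1 + ε) * ((1 + ε) * gramEig Aᴴ ⟨j, hp⟩) :=
        mul_le_mul_of_nonneg_left (hM₂.gramEig_mul_le hε _) (by linarith)
    _ = (1 + ε) ^ 2 * gramEig A ⟨j, hq⟩ := by rw [gramEig_conjTranspose _ hp hq]; ring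

lemma le_gramEig_mul_mul_conjTranspose (hM₁ : IsJLMap M₁ ε (Set.range A.mulVec))
    (hM₂ : IsJLMap M₂ ε (Set.range Aᴴ.mulVec)) (hε : ε ≤ 1) (hp : j < p) (hq : j < q)
    (hm : j < m₂) :
    (1 - ε) ^ 2 * gramEig A ⟨j, hq⟩ ≤ gramEig (M₁ * A * M₂ᴴ) ⟨j, hm⟩ :=
  calc (1 - ε) ^ 2 * gramEig A ⟨j, hq⟩
        = (1 - ε) * ((1 - ε) * gramEig Aᴴ ⟨j, hp⟩) := by
        rw [gramEig_conjTranspose _ hp hq]; ring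
    _ ≤ (1 - ε) * gramEig (M₂ * Aᴴ) ⟨j, hp⟩ :=
        mul_le_mul_of_nonneg_left (hM₂.mul_gramEig_le hε _) (by linarith)
    _ = (1 - ε) * gramEig (A * M₂ᴴ) ⟨j, hm⟩ := by
        rw [← gramEig_conjTranspose _ hp hm, conjTranspose_mul, conjTranspose_conjTranspose]
    _ ≤ gramEig (M₁ * A * M₂ᴴ) ⟨j, hm⟩ := by
        rw [Matrix.mul_assoc]; exact (hM₁.of_range_mul M₂ᴴ).mul_gramEig_le hε _

end Sandwich

lemma sval_eq_sqrt_gramEig {d j : ℕ} (B : Matrix (Fin d) (Fin d) ℂ) (h : j < d) :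
    sval B j = √(gramEig B ⟨j, h⟩) :=
  dif_pos h

lemma sval_of_le {d j : ℕ} (B : Matrix (Fin d) (Fin d) ℂ) (h : d ≤ j) : sval B j = 0 :=
  dif_neg h.not_gt

lemma abs_sqrt_sub_sqrt_le_of_sq_mul_le {a b ε : ℝ} (hε₀ : -1 ≤ ε) (hε₁ : ε ≤ 1)
    (hlo : (1 - ε) ^ 2 * a ≤ b) (hup : b ≤ (1 + ε) ^ 2 * a) :
    |√b - √a| ≤ ε * √a := by
  have hlo' := Real.sqrt_le_sqrt hlo
  have hup' := Real.sqrt_le_sqrt hup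
  rw [Real.sqrt_mul (sq_nonneg _), Real.sqrt_sq (by linarith)] at hlo' hup'
  rw [abs_sub_le_iff]
  constructor <;> linarith

theorem stmt_0_general {N m : ℕ}
    (A : Matrix (Fin N) (Fin N) ℂ)
    (ε : ℝ) (hε0 : 0 < ε) (hε1 : ε < 1)
    (M₁ M₂ : Matrix (Fin m) (Fin N) ℂ)
    (hM₁ : IsJLMap M₁ ε (Set.range A.mulVec))
    (hM₂ : IsJLMap M₂ ε (Set.range (Aᴴ).mulVec)) :
    ∀ j : ℕ, j < N →
      |sval (M₁ * A * M₂ᴴ) j - sval A j| ≤ ε * (2 + ε) * sval A j := by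
  intro j hjN
  have hsA := sval_eq_sqrt_gramEig A hjN
  have hweaken : ε * sval A j ≤ ε * (2 + ε) * sval A j := by
    have hs : 0 ≤ sval A j := hsA ▸ Real.sqrt_nonneg _
    nlinarith [mul_nonneg hε0.le hs]
  refine le_trans ?_ hweaken
  by_cases hjm : j < m
  · rw [sval_eq_sqrt_gramEig _ hjm, hsA]
    exact abs_sqrt_sub_sqrt_le_of_sq_mul_le (by linarith) hε1.le
      (le_gramEig_mul_mul_conjTranspose hM₁ hM₂ hε1.le hjN hjN hjm)
      (gramEig_mul_mul_conjTranspose_le hM₁ hM₂ (by linarith) hjN hjN hjm)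
  · have hA : gramEig A ⟨j, hjN⟩ = 0 :=
      gramEig_eq_zero_of_rank_le A _ ((hM₁.rank_le hε1).trans (not_lt.1 hjm))
    rw [sval_of_le _ (not_lt.1 hjm), hsA, hA]
    simp

/-- If `M₁` is an ε-JL map of the column space of `A` and `M₂` is an ε-JL map
of the column space of `A*`, then `|σ_j(M₁ A M₂*) − σ_j(A)| ≤ ε(2+ε)·σ_j(A)` for all `j`. -/
theorem stmt_0 {N m : ℕ} (hN : 0 < N) (hm : 0 < m)
    (A : Matrix (Fin N) (Fin N) ℂ) (r : ℕ) (hrank : A.rank = r)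
    (ε : ℝ) (hε0 : 0 < ε) (hε1 : ε < 1)
    (M₁ M₂ : Matrix (Fin m) (Fin N) ℂ)
    (hM₁ : IsJLMap M₁ ε (Set.range A.mulVec))
    (hM₂ : IsJLMap M₂ ε (Set.range (Aᴴ).mulVec)) :
    ∀ j : ℕ, j < N →
      |sval (M₁ * A * M₂ᴴ) j - sval A j| ≤ ε * (2 + ε) * sval A j :=
  stmt_0_general A ε hε0 hε1 M₁ M₂ hM₁ hM₂
end

section
/- Let W ∈ {0,1}^{m'×N} be (K, α)-coherent and let B'_N ∈ {0,1}^{2(1+⌈log₂N⌉)×N} be the extended bit testing matrix. Then the Khatri–Rao product W ⊙ B'_N is (K·(1+⌈log₂N⌉), α·(1+⌈log₂N⌉))-coherent. -/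
/-- A binary matrix `W` is `(K, α)`-coherent: it has `{0,1}` entries, every column contains at
least `K` ones, and distinct columns have inner product at most `α`. -/
def Coherent {m N : ℕ} (W : Matrix (Fin m) (Fin N) ℝ) (K : ℕ) (α : ℝ) : Prop :=
  (∀ i j, W i j = 0 ∨ W i j = 1) ∧
  (∀ j, (K : ℝ) ≤ ∑ i, W i j) ∧
  (∀ j l, j ≠ l → ∑ i, W i j * W i l ≤ α)

/-- The bit testing matrix `B_N ∈ {0,1}^{(1+⌈log₂N⌉)×N}`: the `k`-th column (0-based) is a `1`
followed by the binary expansion of `k`. -/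
def bitTest (N : ℕ) : Matrix (Fin (1 + Nat.clog 2 N)) (Fin N) ℝ :=
  fun i k => if (i : ℕ) = 0 then 1 else if Nat.testBit (k : ℕ) ((i : ℕ) - 1) then 1 else 0

/-- The extended bit testing matrix `B'_N ∈ {0,1}^{2(1+⌈log₂N⌉)×N}`, obtained by appending to
each column of `B_N` its binary complement. -/
def bitTestExt (N : ℕ) : Matrix (Fin (2 * (1 + Nat.clog 2 N))) (Fin N) ℝ :=
  fun i k =>
    if h : (i : ℕ) < 1 + Nat.clog 2 N then bitTest N ⟨i, h⟩ k
    else 1 - bitTest N ⟨(i : ℕ) - (1 + Nat.clog 2 N), by have := i.isLt; omega⟩ k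

/-- The Khatri–Rao (columnwise Kronecker) product: `(B ⊙ C)_{qm+r,k} = B_{r,k}·C_{q,k}`. -/
def khatriRao {m p N : ℕ} (B : Matrix (Fin m) (Fin N) ℝ) (C : Matrix (Fin p) (Fin N) ℝ) :
    Matrix (Fin (m * p)) (Fin N) ℝ :=
  fun i k =>
    B ⟨(i : ℕ) % m, Nat.mod_lt _ (Nat.pos_of_ne_zero
        (by rintro rfl; exact absurd i.isLt (by simp)))⟩ k *
    C ⟨(i : ℕ) / m, Nat.div_lt_of_lt_mul i.isLt⟩ k

/-! The columns of `W ⊙ C` are Kronecker products of columns of `W` and `C`, so column sums and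
inner products of `W ⊙ C` are products of those of `W` and `C`. Every column of `B'_N` has exactly
`1 + ⌈log₂ N⌉` ones, one from each bit or its complement; hence column weights of `W` get
multiplied by this number, and inner products of columns of `W` by at most this number. -/

def khatriRaoRowEquiv (m p : ℕ) : Fin p × Fin m ≃ Fin (m * p) :=
  finProdFinEquiv.trans (finCongr (mul_comm p m))

theorem khatriRaoRowEquiv_val {m p : ℕ} (q : Fin p) (r : Fin m) :
    (khatriRaoRowEquiv m p (q, r) : ℕ) = r + m * q :=
  finProdFinEquiv_apply_val (q, r)

section

variable {m p N : ℕ}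

theorem khatriRao_khatriRaoRowEquiv (B : Matrix (Fin m) (Fin N) ℝ)
    (C : Matrix (Fin p) (Fin N) ℝ) (q : Fin p) (r : Fin m) (k : Fin N) :
    khatriRao B C (khatriRaoRowEquiv m p (q, r)) k = B r k * C q k := by
  have hm : 0 < m := r.pos
  have hval := khatriRaoRowEquiv_val q r
  unfold khatriRao
  congr 2 <;> apply Fin.ext
  · simp only [hval, Nat.add_mul_mod_self_left, Nat.mod_eq_of_lt r.isLt]
  · simp only [hval, Nat.add_mul_div_left _ _ hm, Nat.div_eq_of_lt r.isLt, Nat.zero_add]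

theorem sum_khatriRao (B : Matrix (Fin m) (Fin N) ℝ) (C : Matrix (Fin p) (Fin N) ℝ)
    (k : Fin N) : ∑ i, khatriRao B C i k = (∑ r, B r k) * ∑ q, C q k := by
  rw [← Fintype.sum_equiv (khatriRaoRowEquiv m p) _ _ fun _ => rfl, Fintype.sum_prod_type,
    Finset.sum_mul_sum, Finset.sum_comm]
  simp only [khatriRao_khatriRaoRowEquiv]

theorem sum_khatriRao_mul_khatriRao (B : Matrix (Fin m) (Fin N) ℝ)
    (C : Matrix (Fin p) (Fin N) ℝ) (k l : Fin N) :
    ∑ i, khatriRao B C i k * khatriRao B C i l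
      = (∑ r, B r k * B r l) * ∑ q, C q k * C q l := by
  rw [← Fintype.sum_equiv (khatriRaoRowEquiv m p) _ _ fun _ => rfl, Fintype.sum_prod_type,
    Finset.sum_mul_sum, Finset.sum_comm]
  simp only [khatriRao_khatriRaoRowEquiv, mul_mul_mul_comm]

end

theorem mul_eq_zero_or_one {a b : ℝ} (ha : a = 0 ∨ a = 1) (hb : b = 0 ∨ b = 1) :
    a * b = 0 ∨ a * b = 1 := by
  rcases ha with rfl | rfl <;> simp [hb]

theorem nonneg_of_eq_zero_or_one {a : ℝ} (ha : a = 0 ∨ a = 1) : 0 ≤ a := by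
  rcases ha with rfl | rfl <;> norm_num

theorem le_one_of_eq_zero_or_one {a : ℝ} (ha : a = 0 ∨ a = 1) : a ≤ 1 := by
  rcases ha with rfl | rfl <;> norm_num

theorem Coherent.khatriRao {m p N K L : ℕ} {α : ℝ} {W : Matrix (Fin m) (Fin N) ℝ}
    {C : Matrix (Fin p) (Fin N) ℝ} (hW : Coherent W K α)
    (hC : ∀ q k, C q k = 0 ∨ C q k = 1) (hCsum : ∀ k, ∑ q, C q k = L) :
    Coherent (khatriRao W C) (K * L) (α * L) := by
  obtain ⟨hW01, hWsum, hWinner⟩ := hW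
  refine ⟨fun i k => ?_, fun k => ?_, fun k l hkl => ?_⟩
  · exact mul_eq_zero_or_one (hW01 _ k) (hC _ k)
  · rw [sum_khatriRao, hCsum, Nat.cast_mul]
    exact mul_le_mul_of_nonneg_right (hWsum k) L.cast_nonneg
  · have hWnonneg : 0 ≤ ∑ r, W r k * W r l := Finset.sum_nonneg fun r _ =>
      mul_nonneg (nonneg_of_eq_zero_or_one (hW01 r k)) (nonneg_of_eq_zero_or_one (hW01 r l))
    have hCle : ∑ q, C q k * C q l ≤ L := by
      rw [← hCsum k]
      exact Finset.sum_le_sum fun q _ => mul_le_of_le_one_right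
        (nonneg_of_eq_zero_or_one (hC q k)) (le_one_of_eq_zero_or_one (hC q l))
    rw [sum_khatriRao_mul_khatriRao]
    calc (∑ r, W r k * W r l) * ∑ q, C q k * C q l
        ≤ (∑ r, W r k * W r l) * L := mul_le_mul_of_nonneg_left hCle hWnonneg
      _ ≤ α * L := mul_le_mul_of_nonneg_right (hWinner k l hkl) L.cast_nonneg

theorem bitTest_eq_zero_or_one (N : ℕ) (i : Fin (1 + Nat.clog 2 N)) (k : Fin N) :
    bitTest N i k = 0 ∨ bitTest N i k = 1 := by
  unfold bitTest
  split_ifs <;> simp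

theorem bitTestExt_eq_zero_or_one (N : ℕ) (i : Fin (2 * (1 + Nat.clog 2 N))) (k : Fin N) :
    bitTestExt N i k = 0 ∨ bitTestExt N i k = 1 := by
  unfold bitTestExt
  split_ifs
  · exact bitTest_eq_zero_or_one N _ k
  · rcases bitTest_eq_zero_or_one N ⟨i - (1 + Nat.clog 2 N), by omega⟩ k with h | h <;>
      simp [h]

theorem bitTestExt_castAdd (N : ℕ) (i : Fin (1 + Nat.clog 2 N)) (k : Fin N) :
    bitTestExt N (Fin.cast (two_mul _).symm (Fin.castAdd _ i)) k = bitTest N i k := by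
  simp [bitTestExt]

theorem bitTestExt_natAdd (N : ℕ) (i : Fin (1 + Nat.clog 2 N)) (k : Fin N) :
    bitTestExt N (Fin.cast (two_mul _).symm (Fin.natAdd _ i)) k = 1 - bitTest N i k := by
  simp [bitTestExt]

theorem sum_bitTestExt (N : ℕ) (k : Fin N) :
    ∑ i, bitTestExt N i k = (1 + Nat.clog 2 N : ℕ) := by
  rw [← Fin.sum_congr' _ (two_mul _).symm, Fin.sum_univ_add]
  simp only [bitTestExt_castAdd, bitTestExt_natAdd, ← Finset.sum_add_distrib, add_sub_cancel,
    Finset.sum_const, Finset.card_univ, Fintype.card_fin, nsmul_one]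

/-- If `W` is `(K, α)`-coherent then the Khatri–Rao product `W ⊙ B'_N` with
the extended bit testing matrix is `(K(1+⌈log₂N⌉), α(1+⌈log₂N⌉))`-coherent. -/
theorem stmt_14 {m' N : ℕ} (W : Matrix (Fin m') (Fin N) ℝ) (K α : ℕ)
    (hW : Coherent W K (α : ℝ)) :
    Coherent (khatriRao W (bitTestExt N)) (K * (1 + Nat.clog 2 N))
      ((α : ℝ) * (1 + Nat.clog 2 N)) := by
  exact_mod_cast hW.khatriRao (bitTestExt_eq_zero_or_one N) (sum_bitTestExt N)
end

section
/- Let s, K, α ∈ {1,…,N}, let W ∈ {0,1}^{m'×N} be (K, α)-coherent with K ≥ 4αs + 1, and let B'_N ∈ {0,1}^{2(1+⌈log₂N⌉)×N} be the extended bit testing matrix. Then there exists a map f : ℂ^{2(1+⌈log₂N⌉)m'} → ℂ^N whose outputs are 2s-sparse, such that for all x ∈ ℂ^N and all n ∈ ℂ^{2(1+⌈log₂N⌉)m'}: ‖x − f((W ⊙ B'_N)x + n)‖₂ ≤ ‖x − x_{2s}‖₂ + 6(1+√2)·( ‖x − x_s‖₁/√s + √s·‖n‖_∞ ). -/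
/-- The Euclidean (ℓ²) norm of a vector in `ℂ^n`. -/
noncomputable def l2 {n : ℕ} (x : Fin n → ℂ) : ℝ := Real.sqrt (nsq x)

/-- The ℓ^∞ norm of a vector in `ℂ^n`. -/
noncomputable def linf {n : ℕ} (x : Fin n → ℂ) : ℝ := ⨆ i, ‖x i‖

/-- The best `s`-sparse approximation error of `u` in the ℓ¹ norm. -/
noncomputable def bestErr1 {N : ℕ} (u : Fin N → ℂ) (s : ℕ) : ℝ :=
  sInf {t : ℝ | ∃ v : Fin N → ℂ, Set.ncard {i | v i ≠ 0} ≤ s ∧ t = ∑ i, ‖u i - v i‖}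

/-- The best `s`-sparse approximation error of `u` in the ℓ² norm. -/
noncomputable def bestErr2 {N : ℕ} (u : Fin N → ℂ) (s : ℕ) : ℝ :=
  sInf {t : ℝ | ∃ v : Fin N → ℂ, Set.ncard {i | v i ≠ 0} ≤ s ∧ t = l2 (u - v)}

/-!
Only the all-ones first row of `B'_N` is needed: it makes `W ⊙ B'_N` contain the rows of `W`.
For a coordinate `j` and a set `T` of at most `2s` coordinates, coherence leaves at least
`K - 2αs ≥ 2αs + 1` rows of `W` that contain `j` but no other element of `T`, and every column
outside `T` meets them in at most `α` rows. Averaging over these rows gives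
`|h_j| ≤ ‖Wh‖_∞ + ‖h_{Tᶜ}‖₁ / (2s)`, and summing squares yields the `ℓ∞`-robust null space property
`‖h‖₂ ≤ √2 (√s ‖Wh‖_∞ + ‖h_{Tᶜ}‖₁ / √s)`.

The decoder minimises `σ_s(u)₁ / √s + √s ‖y - Au‖_∞` and returns a best `2s`-term approximation
of a minimiser `x♯`. The null space property for `x - x♯`, on the union of best `s`-supports of `x`
and `x♯`, bounds `‖x - x♯‖₂` by `2√2` times the objective at `x`, which is
`σ_s(x)₁ / √s + √s ‖n‖_∞`; truncating `x♯` costs one more `‖x - x♯‖₂`, and `4√2 ≤ 6(1 + √2)`.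
-/

open Finset Matrix

section Norms
variable {n : ℕ}

lemma linf_eq_norm (x : Fin n → ℂ) : linf x = ‖x‖ := by
  rcases isEmpty_or_nonempty (Fin n) with hn | hn
  · simp [linf, Subsingleton.elim x 0]
  · exact le_antisymm (ciSup_le fun i => norm_le_pi_norm x i)
      ((pi_norm_le_iff_of_nonneg (Real.iSup_nonneg fun i => norm_nonneg (x i))).2
        fun i => le_ciSup (f := fun i => ‖x i‖) (Set.finite_range _).bddAbove i)

lemma l2_eq_norm (x : Fin n → ℂ) : l2 x = ‖WithLp.toLp 2 x‖ := by
  rw [EuclideanSpace.norm_eq]; rfl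

lemma l2_add_le (x y : Fin n → ℂ) : l2 (x + y) ≤ l2 x + l2 y := by
  simpa only [l2_eq_norm, WithLp.toLp_add] using norm_add_le _ _

lemma l2_sub_comm (x y : Fin n → ℂ) : l2 (x - y) = l2 (y - x) := by
  simp only [l2_eq_norm, WithLp.toLp_sub, norm_sub_rev]

lemma norm_le_l2 (x : Fin n → ℂ) : ‖x‖ ≤ l2 x :=
  (pi_norm_le_iff_of_nonneg (r := l2 x) (Real.sqrt_nonneg _)).2 fun i => by
    rw [l2_eq_norm]
    exact PiLp.norm_apply_le (WithLp.toLp 2 x) i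

end Norms

section BestApproximation
variable {N : ℕ}

lemma ncard_support_piecewise_le (T : Finset (Fin N)) (u : Fin N → ℂ) :
    Set.ncard {i | T.piecewise u 0 i ≠ 0} ≤ #T := by
  refine (Set.ncard_le_ncard (fun i hi => ?_) T.finite_toSet).trans_eq (Set.ncard_coe_finset T)
  by_contra hiT
  exact hi (T.piecewise_eq_of_notMem _ _ hiT)

lemma sum_norm_sub_piecewise (T : Finset (Fin N)) (u : Fin N → ℂ) :
    ∑ i, ‖(u - T.piecewise u 0) i‖ = ∑ i ∈ Tᶜ, ‖u i‖ := by
  rw [← sum_add_sum_compl T, sum_eq_zero fun i hi => by simp [hi], zero_add]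
  exact sum_congr rfl fun i hi => by simp [mem_compl.1 hi]

lemma exists_isLeast_sparseError (e : (Fin N → ℂ) → ℝ)
    (he : ∀ a b : Fin N → ℂ, (∀ i, ‖a i‖ ≤ ‖b i‖) → e a ≤ e b) (u : Fin N → ℂ) (s : ℕ) :
    ∃ T : Finset (Fin N), #T ≤ s ∧
      IsLeast {t | ∃ v : Fin N → ℂ, Set.ncard {i | v i ≠ 0} ≤ s ∧ t = e (u - v)}
        (e (u - T.piecewise u 0)) := by
  obtain ⟨T, hT, hmin⟩ := exists_min_image ({T | #T ≤ s} : Finset (Finset (Fin N)))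
    (fun T => e (u - T.piecewise u 0)) ⟨∅, by simp⟩
  rw [mem_filter] at hT
  refine ⟨T, hT.2, ⟨_, (ncard_support_piecewise_le T u).trans hT.2, rfl⟩, ?_⟩
  rintro _ ⟨v, hv, rfl⟩
  set T' : Finset (Fin N) := {i | v i ≠ 0}
  have hT' : #T' ≤ s := by
    rwa [← Set.ncard_coe_finset, show (T' : Set (Fin N)) = {i | v i ≠ 0} by ext; simp [T']]
  refine (hmin T' (by simpa using hT')).trans (he _ _ fun i => ?_)
  by_cases hi : v i = 0 <;> simp [T', hi]

lemma exists_bestErr1_eq (u : Fin N → ℂ) (s : ℕ) :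
    ∃ T : Finset (Fin N), #T ≤ s ∧ bestErr1 u s = ∑ i ∈ Tᶜ, ‖u i‖ := by
  obtain ⟨T, hT, hleast⟩ := exists_isLeast_sparseError (fun w => ∑ i, ‖w i‖)
    (fun a b hab => sum_le_sum fun i _ => hab i) u s
  exact ⟨T, hT, hleast.csInf_eq.trans (sum_norm_sub_piecewise T u)⟩

lemma bestErr1_le_sum_compl (u : Fin N → ℂ) {s : ℕ} {T : Finset (Fin N)} (hT : #T ≤ s) :
    bestErr1 u s ≤ ∑ i ∈ Tᶜ, ‖u i‖ := by
  obtain ⟨_, _, hleast⟩ := exists_isLeast_sparseError (fun w => ∑ i, ‖w i‖)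
    (fun a b hab => sum_le_sum fun i _ => hab i) u s
  rw [← sum_norm_sub_piecewise]
  exact hleast.csInf_eq.trans_le
    (hleast.2 ⟨T.piecewise u 0, (ncard_support_piecewise_le T u).trans hT, rfl⟩)

lemma bestErr1_nonneg (u : Fin N → ℂ) (s : ℕ) : 0 ≤ bestErr1 u s := by
  obtain ⟨T, -, hT⟩ := exists_bestErr1_eq u s
  rw [hT]
  positivity

lemma bestErr1_le_add_dist (u v : Fin N → ℂ) (s : ℕ) :
    bestErr1 u s ≤ bestErr1 v s + N * dist u v := by
  obtain ⟨T, hT, hv⟩ := exists_bestErr1_eq v s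
  calc bestErr1 u s ≤ ∑ i ∈ Tᶜ, ‖u i‖ := bestErr1_le_sum_compl u hT
    _ ≤ ∑ i ∈ Tᶜ, (‖v i‖ + ‖u - v‖) :=
        sum_le_sum fun i _ => norm_le_norm_add_norm_sub' (u i) (v i) |>.trans
          (add_le_add_right (norm_le_pi_norm (u - v) i) _)
    _ ≤ bestErr1 v s + N * dist u v := by
        rw [sum_add_distrib, ← hv, sum_const, nsmul_eq_mul, dist_eq_norm]
        gcongr
        exact_mod_cast (card_le_univ _).trans_eq (Fintype.card_fin N)

lemma continuous_bestErr1 (s : ℕ) : Continuous fun u : Fin N → ℂ => bestErr1 u s :=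
  (LipschitzWith.of_le_add_mul N fun u v => by
    simpa using bestErr1_le_add_dist u v s).continuous

lemma exists_bestErr2_eq (u : Fin N → ℂ) (s : ℕ) :
    ∃ v : Fin N → ℂ, Set.ncard {i | v i ≠ 0} ≤ s ∧ bestErr2 u s = l2 (u - v) := by
  obtain ⟨T, hT, hleast⟩ := exists_isLeast_sparseError l2 (fun a b hab => Real.sqrt_le_sqrt <|
    sum_le_sum fun i _ => pow_le_pow_left₀ (norm_nonneg _) (hab i) 2) u s
  exact ⟨T.piecewise u 0, (ncard_support_piecewise_le T u).trans hT, hleast.csInf_eq⟩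

lemma bestErr2_le_add_l2_sub (u v : Fin N → ℂ) (s : ℕ) :
    bestErr2 u s ≤ bestErr2 v s + l2 (u - v) := by
  obtain ⟨_, _, hleast⟩ := exists_isLeast_sparseError l2 (fun a b hab => Real.sqrt_le_sqrt <|
    sum_le_sum fun i _ => pow_le_pow_left₀ (norm_nonneg _) (hab i) 2) u s
  obtain ⟨w, hw, hvw⟩ := exists_bestErr2_eq v s
  calc bestErr2 u s ≤ l2 (u - w) := hleast.csInf_eq.trans_le (hleast.2 ⟨w, hw, rfl⟩)
    _ ≤ l2 (v - w) + l2 (u - v) := by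
        rw [add_comm]; simpa using l2_add_le (u - v) (v - w)
    _ = bestErr2 v s + l2 (u - v) := by rw [hvw]

end BestApproximation

section Coherent
variable {m N K α s : ℕ} {W : Matrix (Fin m) (Fin N) ℝ}

noncomputable def colSupport (W : Matrix (Fin m) (Fin N) ℝ) (l : Fin N) : Finset (Fin m) :=
  {r | W r l = 1}

lemma Coherent.apply_eq_ite (hW : Coherent W K α) (r : Fin m) (l : Fin N) :
    W r l = if r ∈ colSupport W l then 1 else 0 := by
  rcases hW.1 r l with h | h <;> simp [colSupport, h]

lemma Coherent.apply_nonneg (hW : Coherent W K α) (r : Fin m) (l : Fin N) : 0 ≤ W r l := by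
  rw [hW.apply_eq_ite]; positivity

lemma Coherent.le_card_colSupport (hW : Coherent W K α) (l : Fin N) : K ≤ #(colSupport W l) := by
  have h := hW.2.1 l
  rw [sum_congr rfl fun r _ => hW.apply_eq_ite r l, sum_boole, filter_mem_eq_inter,
    univ_inter] at h
  exact_mod_cast h

lemma Coherent.card_colSupport_inter_le (hW : Coherent W K α) {j l : Fin N} (hjl : j ≠ l) :
    #(colSupport W j ∩ colSupport W l) ≤ α := by
  have h := hW.2.2 j l hjl
  simp only [hW.apply_eq_ite _ j, hW.apply_eq_ite _ l, ite_zero_mul_ite_zero, mul_one,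
    ← mem_inter, sum_boole, filter_mem_eq_inter, univ_inter] at h
  exact_mod_cast h

lemma Coherent.exists_isolating_rows (hW : Coherent W K α) (hKs : 4 * α * s + 1 ≤ K)
    {T : Finset (Fin N)} (hT : #T ≤ 2 * s) (j : Fin N) :
    ∃ G : Finset (Fin m), 2 * α * s + 1 ≤ #G ∧
      ∀ r ∈ G, W r j = 1 ∧ ∀ l ∈ T, l ≠ j → W r l = 0 := by
  set bad := (T.erase j).biUnion fun l => colSupport W j ∩ colSupport W l
  refine ⟨colSupport W j \ bad, ?_, fun r hr => ?_⟩
  · have hbad : #bad ≤ 2 * s * α := calc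
      #bad ≤ ∑ l ∈ T.erase j, #(colSupport W j ∩ colSupport W l) := card_biUnion_le
      _ ≤ ∑ l ∈ T.erase j, α :=
          sum_le_sum fun l hl => hW.card_colSupport_inter_le (ne_of_mem_erase hl).symm
      _ ≤ 2 * s * α := by
          rw [sum_const, smul_eq_mul]
          exact Nat.mul_le_mul_right _ (card_erase_le.trans hT)
    have := le_card_sdiff bad (colSupport W j)
    have := hW.le_card_colSupport j
    have : 4 * α * s = 2 * s * α + 2 * α * s := by ring
    omega
  · obtain ⟨hrj, hrbad⟩ := mem_sdiff.1 hr
    refine ⟨by simpa [colSupport] using hrj, fun l hl hlj => ?_⟩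
    refine (hW.1 r l).resolve_right fun hrl => hrbad (mem_biUnion.2 ⟨l, mem_erase.2 ⟨hlj, hl⟩, ?_⟩)
    exact mem_inter.2 ⟨hrj, by simpa [colSupport] using hrl⟩

lemma Coherent.norm_mulVec_apply_sub_le (hW : Coherent W K α) {T : Finset (Fin N)} {j : Fin N}
    {r : Fin m} (hr : W r j = 1 ∧ ∀ l ∈ T, l ≠ j → W r l = 0) (h : Fin N → ℂ) :
    ‖(W.map (↑) *ᵥ h) r - h j‖ ≤ ∑ l ∈ Tᶜ.erase j, W r l * ‖h l‖ := by
  have hrow : (W.map (↑) *ᵥ h) r - h j = ∑ l ∈ Tᶜ.erase j, (W r l : ℂ) * h l := by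
    rw [Matrix.mulVec, dotProduct, ← add_sum_erase _ _ (mem_univ j)]
    simp only [Matrix.map_apply, hr.1, Complex.ofReal_one, one_mul, add_sub_cancel_left]
    refine (sum_subset (erase_subset_erase _ (subset_univ _)) fun l hl hlT => ?_).symm
    have hlj := ne_of_mem_erase hl
    rw [hr.2 l (by simpa [hlj] using hlT) hlj, Complex.ofReal_zero, zero_mul]
  rw [hrow]
  refine (norm_sum_le _ _).trans_eq (sum_congr rfl fun l _ => ?_)
  rw [norm_mul, Complex.norm_real, Real.norm_of_nonneg (hW.apply_nonneg r l)]

lemma Coherent.sum_sum_mul_norm_le (hW : Coherent W K α) {G : Finset (Fin m)} {j : Fin N}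
    (hG : ∀ r ∈ G, W r j = 1) (T : Finset (Fin N)) (h : Fin N → ℂ) :
    ∑ r ∈ G, ∑ l ∈ Tᶜ.erase j, W r l * ‖h l‖ ≤ α * ∑ l ∈ Tᶜ, ‖h l‖ := by
  rw [sum_comm, mul_sum]
  refine (sum_le_sum fun l hl => ?_).trans
    (sum_le_sum_of_subset_of_nonneg (erase_subset _ _) fun _ _ _ => by positivity)
  rw [← sum_mul]
  gcongr
  calc ∑ r ∈ G, W r l = ∑ r ∈ G, W r j * W r l :=
        sum_congr rfl fun r hr => by rw [hG r hr, one_mul]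
    _ ≤ ∑ r, W r j * W r l := sum_le_sum_of_subset_of_nonneg (subset_univ _)
        fun r _ _ => mul_nonneg (hW.apply_nonneg r j) (hW.apply_nonneg r l)
    _ ≤ α := hW.2.2 j l (ne_of_mem_erase hl).symm

theorem Coherent.norm_apply_le (hW : Coherent W K α) (hs : 1 ≤ s) (hKs : 4 * α * s + 1 ≤ K)
    (h : Fin N → ℂ) {T : Finset (Fin N)} (hT : #T ≤ 2 * s) (j : Fin N) :
    ‖h j‖ ≤ ‖W.map (↑) *ᵥ h‖ + (∑ l ∈ Tᶜ, ‖h l‖) / (2 * s) := by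
  obtain ⟨G, hGcard, hG⟩ := hW.exists_isolating_rows hKs hT j
  set σ := ∑ l ∈ Tᶜ, ‖h l‖
  have hrow : ∀ r ∈ G, ‖h j‖ ≤ ‖W.map (↑) *ᵥ h‖ + ∑ l ∈ Tᶜ.erase j, W r l * ‖h l‖ :=
    fun r hr => (norm_le_norm_add_norm_sub' _ ((W.map (↑) *ᵥ h) r)).trans <| by
      rw [norm_sub_rev]
      exact add_le_add (norm_le_pi_norm _ r) (hW.norm_mulVec_apply_sub_le (hG r hr) h)
  have havg : (#G : ℝ) * ‖h j‖ ≤ #G * ‖W.map (↑) *ᵥ h‖ + α * σ := calc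
    (#G : ℝ) * ‖h j‖ = ∑ r ∈ G, ‖h j‖ := by rw [sum_const, nsmul_eq_mul]
    _ ≤ ∑ r ∈ G, (‖W.map (↑) *ᵥ h‖ + ∑ l ∈ Tᶜ.erase j, W r l * ‖h l‖) := sum_le_sum hrow
    _ ≤ #G * ‖W.map (↑) *ᵥ h‖ + α * σ := by
        rw [sum_add_distrib, sum_const, nsmul_eq_mul]
        exact add_le_add_right (hW.sum_sum_mul_norm_le (fun r hr => (hG r hr).1) T h) _
  have hGcard' : (2 * α * s + 1 : ℝ) ≤ #G := by exact_mod_cast hGcard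
  have hσ : 0 ≤ σ := by positivity
  rw [← sub_le_iff_le_add', le_div_iff₀ (by positivity)]
  set d := ‖h j‖ - ‖W.map (↑) *ᵥ h‖
  rcases le_or_gt d 0 with hd | hd
  · nlinarith
  -- `(2αs + 1) d ≤ #G d ≤ ασ`, hence `2s d ≤ σ`
  have hαd : (2 * α * s + 1 : ℝ) * d ≤ α * σ := by nlinarith
  nlinarith [mul_le_mul_of_nonneg_left hαd (by positivity : (0 : ℝ) ≤ 2 * s)]

end Coherent

lemma l2_le_of_forall_norm_le {N : ℕ} {h : Fin N → ℂ} {T : Finset (Fin N)} {s E : ℝ}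
    (hs : 0 < s) (hT : (#T : ℝ) ≤ 2 * s) (hE : 0 ≤ E)
    (hh : ∀ j, ‖h j‖ ≤ E + (∑ l ∈ Tᶜ, ‖h l‖) / (2 * s)) :
    l2 h ≤ √2 * (√s * E + (∑ l ∈ Tᶜ, ‖h l‖) / √s) := by
  set σ := ∑ l ∈ Tᶜ, ‖h l‖
  set M := E + σ / (2 * s)
  have hσ : 0 ≤ σ := by positivity
  have hM : 0 ≤ M := by positivity
  have hin : ∑ j ∈ T, ‖h j‖ ^ 2 ≤ 2 * s * M ^ 2 := calc
    ∑ j ∈ T, ‖h j‖ ^ 2 ≤ ∑ _j ∈ T, M ^ 2 :=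
        sum_le_sum fun j _ => pow_le_pow_left₀ (norm_nonneg _) (hh j) 2
    _ ≤ 2 * s * M ^ 2 := by rw [sum_const, nsmul_eq_mul]; gcongr
  have hout : ∑ j ∈ Tᶜ, ‖h j‖ ^ 2 ≤ M * σ := by
    rw [mul_sum]
    exact sum_le_sum fun j _ => by
      rw [sq]; exact mul_le_mul_of_nonneg_right (hh j) (norm_nonneg _)
  have hsq : (√2 * (√s * E + σ / √s)) ^ 2 = 2 * s * E ^ 2 + 4 * E * σ + 2 * σ ^ 2 / s := by
    have h2 := Real.sq_sqrt (zero_le_two : (0 : ℝ) ≤ 2)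
    have hs' := Real.sq_sqrt hs.le
    field_simp
    rw [h2, hs']
    ring
  have hM' : 2 * s * M ^ 2 + M * σ = 2 * s * E ^ 2 + 3 * E * σ + σ ^ 2 / s := by
    simp only [M]; field_simp; ring
  rw [l2, Real.sqrt_le_left (by positivity), hsq]
  calc nsq h = ∑ j ∈ T, ‖h j‖ ^ 2 + ∑ j ∈ Tᶜ, ‖h j‖ ^ 2 := (sum_add_sum_compl T _).symm
    _ ≤ 2 * s * E ^ 2 + 3 * E * σ + σ ^ 2 / s := hM' ▸ add_le_add hin hout
    _ ≤ 2 * s * E ^ 2 + 4 * E * σ + 2 * σ ^ 2 / s := by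
        have : 0 ≤ E * σ + σ ^ 2 / s := by positivity
        linear_combination this

/-- The `ℓ∞`-robust null space property of order `2s`. -/
def HasRobustNullSpaceProperty {p N : ℕ} (A : Matrix (Fin p) (Fin N) ℂ) (s : ℕ) : Prop :=
  ∀ (h : Fin N → ℂ) (T : Finset (Fin N)), #T ≤ 2 * s →
    l2 h ≤ √2 * (√s * ‖A *ᵥ h‖ + (∑ l ∈ Tᶜ, ‖h l‖) / √s)

theorem Coherent.hasRobustNullSpaceProperty {m N K α s : ℕ} {W : Matrix (Fin m) (Fin N) ℝ}
    (hW : Coherent W K α) (hs : 1 ≤ s) (hKs : 4 * α * s + 1 ≤ K) :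
    HasRobustNullSpaceProperty (W.map (↑)) s := fun h _ hT =>
  l2_le_of_forall_norm_le (by positivity) (by exact_mod_cast hT) (norm_nonneg _)
    (hW.norm_apply_le hs hKs h hT)

lemma HasRobustNullSpaceProperty.mono {p q N s : ℕ} {A : Matrix (Fin p) (Fin N) ℂ}
    {B : Matrix (Fin q) (Fin N) ℂ} (hA : HasRobustNullSpaceProperty A s)
    (hAB : ∀ x, ‖A *ᵥ x‖ ≤ ‖B *ᵥ x‖) : HasRobustNullSpaceProperty B s := fun h T hT =>
  (hA h T hT).trans (by gcongr; exact hAB h)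

section KhatriRao
variable {m N : ℕ}

lemma khatriRao_bitTestExt_apply (W : Matrix (Fin m) (Fin N) ℝ) (r : Fin m) (k : Fin N) :
    khatriRao W (bitTestExt N) ⟨r, r.isLt.trans_le (Nat.le_mul_of_pos_right m (by omega))⟩ k =
      W r k := by
  simp [khatriRao, bitTestExt, bitTest, Nat.mod_eq_of_lt r.isLt, Nat.div_eq_of_lt r.isLt]

lemma norm_mulVec_le_norm_khatriRao_bitTestExt_mulVec (W : Matrix (Fin m) (Fin N) ℝ)
    (x : Fin N → ℂ) :
    ‖W.map (↑) *ᵥ x‖ ≤ ‖(khatriRao W (bitTestExt N)).map (↑) *ᵥ x‖ :=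
  (pi_norm_le_iff_of_nonneg (norm_nonneg _)).2 fun r => by
    refine le_of_eq_of_le ?_ (norm_le_pi_norm _
      ⟨r, r.isLt.trans_le (Nat.le_mul_of_pos_right m (by omega))⟩)
    simp [mulVec, dotProduct, khatriRao_bitTestExt_apply]

end KhatriRao

section Decoder
variable {p N s : ℕ} {A : Matrix (Fin p) (Fin N) ℂ}

noncomputable def decodeObjective (A : Matrix (Fin p) (Fin N) ℂ) (s : ℕ) (y : Fin p → ℂ)
    (u : Fin N → ℂ) : ℝ :=
  bestErr1 u s / √s + √s * ‖y - A *ᵥ u‖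

lemma continuous_decodeObjective (A : Matrix (Fin p) (Fin N) ℂ) (s : ℕ) (y : Fin p → ℂ) :
    Continuous (decodeObjective A s y) :=
  ((continuous_bestErr1 s).div_const _).add
    (continuous_const.mul
      (continuous_const.sub (continuous_const.matrix_mulVec continuous_id)).norm)

lemma HasRobustNullSpaceProperty.l2_le_decodeObjective (hA : HasRobustNullSpaceProperty A s)
    (y : Fin p → ℂ) (u : Fin N → ℂ) : l2 u ≤ √2 * (decodeObjective A s y u + √s * ‖y‖) := by
  obtain ⟨T, hT, hu⟩ := exists_bestErr1_eq u s
  have hAu : ‖A *ᵥ u‖ ≤ ‖y - A *ᵥ u‖ + ‖y‖ := by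
    simpa [add_comm] using norm_sub_le y (y - A *ᵥ u)
  calc l2 u ≤ √2 * (√s * ‖A *ᵥ u‖ + bestErr1 u s / √s) := hu ▸ hA u T (by omega)
    _ ≤ √2 * (decodeObjective A s y u + √s * ‖y‖) := by
        rw [decodeObjective]
        gcongr √2 * ?_
        linarith [mul_le_mul_of_nonneg_left hAu (Real.sqrt_nonneg s)]

/-- The null space property makes the objective coercive, so it attains its minimum. -/
lemma HasRobustNullSpaceProperty.exists_forall_decodeObjective_le
    (hA : HasRobustNullSpaceProperty A s) (y : Fin p → ℂ) :
    ∃ xs, ∀ u, decodeObjective A s y xs ≤ decodeObjective A s y u := by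
  refine (continuous_decodeObjective A s y).exists_forall_le' 0 ?_
  filter_upwards [tendsto_norm_cocompact_atTop.eventually_gt_atTop
    (√2 * (decodeObjective A s y 0 + √s * ‖y‖))] with u hu
  by_contra! hlt
  have := (norm_le_l2 u).trans (hA.l2_le_decodeObjective y u)
  have : √2 * (decodeObjective A s y u + √s * ‖y‖) ≤
      √2 * (decodeObjective A s y 0 + √s * ‖y‖) := by
    gcongr
  linarith

theorem HasRobustNullSpaceProperty.l2_sub_le (hA : HasRobustNullSpaceProperty A s)
    {y : Fin p → ℂ} {xs z : Fin N → ℂ}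
    (hxs : ∀ u, decodeObjective A s y xs ≤ decodeObjective A s y u)
    (hz : l2 (xs - z) = bestErr2 xs (2 * s)) (x : Fin N → ℂ) (n : Fin p → ℂ)
    (hy : A *ᵥ x + n = y) :
    l2 (x - z) ≤ bestErr2 x (2 * s) + 4 * √2 * (bestErr1 x s / √s + √s * ‖n‖) := by
  have hFx : decodeObjective A s y x = bestErr1 x s / √s + √s * ‖n‖ := by
    rw [decodeObjective, ← hy, add_sub_cancel_left]
  obtain ⟨Tx, hTx, hx⟩ := exists_bestErr1_eq x s
  obtain ⟨Ts, hTs, hxs'⟩ := exists_bestErr1_eq xs s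
  have htail : ∑ l ∈ (Tx ∪ Ts)ᶜ, ‖(x - xs) l‖ ≤ bestErr1 x s + bestErr1 xs s := by
    rw [hx, hxs']
    calc ∑ l ∈ (Tx ∪ Ts)ᶜ, ‖(x - xs) l‖ ≤ ∑ l ∈ (Tx ∪ Ts)ᶜ, (‖x l‖ + ‖xs l‖) :=
          sum_le_sum fun l _ => norm_sub_le (x l) (xs l)
      _ ≤ ∑ l ∈ Txᶜ, ‖x l‖ + ∑ l ∈ Tsᶜ, ‖xs l‖ := by
          rw [sum_add_distrib]
          gcongr <;> simp
  have hmeas : ‖A *ᵥ (x - xs)‖ ≤ ‖y - A *ᵥ xs‖ + ‖n‖ := by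
    rw [show A *ᵥ (x - xs) = y - A *ᵥ xs - n by rw [mulVec_sub, ← hy]; abel]
    exact norm_sub_le _ _
  have hh : l2 (x - xs) ≤ 2 * √2 * decodeObjective A s y x := calc
    l2 (x - xs) ≤ √2 * (√s * ‖A *ᵥ (x - xs)‖ + (∑ l ∈ (Tx ∪ Ts)ᶜ, ‖(x - xs) l‖) / √s) :=
        hA _ _ (card_union_le _ _ |>.trans (by omega))
    _ ≤ √2 * (√s * (‖y - A *ᵥ xs‖ + ‖n‖) + (bestErr1 x s + bestErr1 xs s) / √s) := by
        gcongr
    _ = √2 * (decodeObjective A s y xs + decodeObjective A s y x) := by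
        rw [hFx, decodeObjective]; ring
    _ ≤ 2 * √2 * decodeObjective A s y x := by
        linarith [mul_le_mul_of_nonneg_left (hxs x) (Real.sqrt_nonneg 2)]
  calc l2 (x - z) ≤ l2 (x - xs) + l2 (xs - z) := by
        simpa using l2_add_le (x - xs) (xs - z)
    _ ≤ bestErr2 x (2 * s) + 2 * l2 (x - xs) := by
        rw [hz, ← l2_sub_comm]
        linarith [bestErr2_le_add_l2_sub xs x (2 * s)]
    _ ≤ bestErr2 x (2 * s) + 4 * √2 * (bestErr1 x s / √s + √s * ‖n‖) := by
        rw [← hFx]; linarith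

end Decoder

theorem stmt_15_general {m' N : ℕ} (s K α : ℕ)
    (hs : 1 ≤ s ∧ s ≤ N)
    (W : Matrix (Fin m') (Fin N) ℝ) (hW : Coherent W K (α : ℝ))
    (hKs : 4 * α * s + 1 ≤ K) :
    ∃ f : (Fin (m' * (2 * (1 + Nat.clog 2 N))) → ℂ) → (Fin N → ℂ),
      (∀ y, Set.ncard {i | f y i ≠ 0} ≤ 2 * s) ∧
      ∀ (x : Fin N → ℂ) (n : Fin (m' * (2 * (1 + Nat.clog 2 N))) → ℂ),
        l2 (x - f (((khatriRao W (bitTestExt N)).map (fun a => (a : ℂ))).mulVec x + n)) ≤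
          bestErr2 x (2 * s) +
            6 * (1 + Real.sqrt 2) * (bestErr1 x s / Real.sqrt s + Real.sqrt s * linf n) := by
  have hA : HasRobustNullSpaceProperty ((khatriRao W (bitTestExt N)).map (↑)) s :=
    (hW.hasRobustNullSpaceProperty hs.1 hKs).mono
      (norm_mulVec_le_norm_khatriRao_bitTestExt_mulVec W)
  choose xs hxs using hA.exists_forall_decodeObjective_le
  choose z hz_sparse hz using fun y => exists_bestErr2_eq (xs y) (2 * s)
  refine ⟨z, hz_sparse, fun x n => ?_⟩
  have hF : 0 ≤ bestErr1 x s / √s + √s * ‖n‖ := by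
    have := bestErr1_nonneg x s
    positivity
  rw [linf_eq_norm]
  calc _ ≤ bestErr2 x (2 * s) + 4 * √2 * (bestErr1 x s / √s + √s * ‖n‖) :=
        hA.l2_sub_le (hxs _) (hz _).symm x n rfl
    _ ≤ _ := by
        gcongr
        · norm_num
        · linarith

/-- Sublinear-time compressive sensing via coherent matrices: if `W` is
`(K, α)`-coherent with `K ≥ 4αs + 1`, then there is a recovery map `f` with `2s`-sparse outputs
such that `‖x − f((W ⊙ B'_N)x + n)‖₂ ≤ ‖x − x_{2s}‖₂ + 6(1+√2)(‖x − x_s‖₁/√s + √s‖n‖_∞)`. -/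
theorem stmt_15 {m' N : ℕ} (s K α : ℕ)
    (hs : 1 ≤ s ∧ s ≤ N) (hK : 1 ≤ K ∧ K ≤ N) (hα : 1 ≤ α ∧ α ≤ N)
    (W : Matrix (Fin m') (Fin N) ℝ) (hW : Coherent W K (α : ℝ))
    (hKs : 4 * α * s + 1 ≤ K) :
    ∃ f : (Fin (m' * (2 * (1 + Nat.clog 2 N))) → ℂ) → (Fin N → ℂ),
      (∀ y, Set.ncard {i | f y i ≠ 0} ≤ 2 * s) ∧
      ∀ (x : Fin N → ℂ) (n : Fin (m' * (2 * (1 + Nat.clog 2 N))) → ℂ),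
        l2 (x - f (((khatriRao W (bitTestExt N)).map (fun a => (a : ℂ))).mulVec x + n)) ≤
          bestErr2 x (2 * s) +
            6 * (1 + Real.sqrt 2) * (bestErr1 x s / Real.sqrt s + Real.sqrt s * linf n) :=
  stmt_15_general s K α hs W hW hKs
end
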